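/- arXiv:1908.06396 — 5 statements merged into one kernel-verified Lean document; each statement's English description precedes it below -/
import Mathlib

section
/- Let Ω be a bounded open convex domain in ℝⁿ (n ≥ 2), let γ ∈ (0,1] and M > 0, and let u be continuous on the closure of Ω, convex on Ω, with u = 0 on ∂Ω. If |u(x)| ≤ M·d_x^γ for all x ∈ Ω, then u is γ-Hölder continuous on the closure of Ω; more precisely, |u(x) − u(y)| ≤ M·|x − y|^γ for all x, y in the closure of Ω, and sup_{closure Ω} |u| ≤ M·(diam Ω)^γ, so the C^γ-norm of u on the closure of Ω is at most M·(1 + (diam Ω)^γ). -/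
/-!
Extend the convexity of `u` to `closure Ω` by continuity. For `x, y ∈ Ω`, follow the ray from `y`
through `x` to a boundary point `z`, so that `x = (1 - t) y + t z` with `0 < t < 1` and
`‖x - y‖ = t ‖z - y‖`. As `u z = 0`, convexity gives `u x - u y ≤ t |u y| ≤ t M ‖z - y‖ ^ γ`,
and `t ≤ t ^ γ` turns this into `M ‖x - y‖ ^ γ`. The Hölder bound passes from `Ω` to its closure
by continuity, and comparing with a boundary point bounds `|u|` by `M (diam Ω) ^ γ`.
-/

open Set Metric Bornology AffineMap

theorem ConvexOn.closure {E : Type*} [TopologicalSpace E] [AddCommGroup E] [Module ℝ E]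
    [IsTopologicalAddGroup E] [ContinuousSMul ℝ E] {s : Set E} {u : E → ℝ}
    (hu : ConvexOn ℝ s u) (hc : ContinuousOn u (closure s)) : ConvexOn ℝ (closure s) u := by
  refine ⟨hu.1.closure, fun x hx y hy a b ha hb hab => ?_⟩
  have key := le_on_closure (s := s ×ˢ s) (f := fun p : E × E => u (a • p.1 + b • p.2))
    (g := fun p => a * u p.1 + b * u p.2) fun p hp => hu.2 hp.1 hp.2 ha hb hab
  rw [closure_prod_eq] at key
  refine key (hc.comp (by fun_prop) fun p hp => hu.1.closure hp.1 hp.2 ha hb hab) ?_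
    (mk_mem_prod hx hy)
  exact (continuousOn_const.mul (hc.comp continuousOn_fst fun p hp => hp.1)).add
    (continuousOn_const.mul (hc.comp continuousOn_snd fun p hp => hp.2))

section NormedAddCommGroup

variable {E : Type*} [NormedAddCommGroup E] {s : Set E} {u : E → ℝ} {M γ : ℝ}

theorem abs_sub_le_mul_norm_rpow_on_closure (hc : ContinuousOn u (closure s)) (hγ : 0 ≤ γ)
    (h : ∀ x ∈ s, ∀ y ∈ s, |u x - u y| ≤ M * ‖x - y‖ ^ γ) :
    ∀ x ∈ closure s, ∀ y ∈ closure s, |u x - u y| ≤ M * ‖x - y‖ ^ γ := by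
  intro x hx y hy
  have key := le_on_closure (s := s ×ˢ s) (f := fun p : E × E => |u p.1 - u p.2|)
    (g := fun p => M * ‖p.1 - p.2‖ ^ γ) fun p hp => h _ hp.1 _ hp.2
  rw [closure_prod_eq] at key
  refine key (((hc.comp continuousOn_fst fun p hp => hp.1).sub
    (hc.comp continuousOn_snd fun p hp => hp.2)).abs) ?_ (mk_mem_prod hx hy)
  exact (continuous_const.mul ((continuous_fst.sub continuous_snd).norm.rpow_const
    fun _ => Or.inr hγ)).continuousOn

theorem abs_le_mul_diam_rpow (hb : IsBounded s) (hM : 0 ≤ M) (hγ : 0 ≤ γ)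
    (hhol : ∀ x ∈ closure s, ∀ y ∈ closure s, |u x - u y| ≤ M * ‖x - y‖ ^ γ)
    (hfr : ∀ z ∈ frontier s, u z = 0) (hbound : ∀ x ∈ s, |u x| ≤ M * infDist x (frontier s) ^ γ)
    {x : E} (hx : x ∈ closure s) : |u x| ≤ M * diam s ^ γ := by
  rcases (frontier s).eq_empty_or_nonempty with hempty | ⟨z, hz⟩
  · -- then `closure s = s`, and `infDist x ∅ = 0` forces `u = 0` on `s`
    rw [closure_eq_self_union_frontier, hempty, union_empty] at hx
    calc |u x| ≤ M * 0 ^ γ := by simpa [hempty] using hbound x hx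
      _ ≤ M * diam s ^ γ := by gcongr; exact diam_nonneg
  have hzx : ‖x - z‖ ≤ diam s := by
    rw [← diam_closure, ← dist_eq_norm]
    exact dist_le_diam_of_mem hb.closure hx (frontier_subset_closure hz)
  calc |u x| = |u x - u z| := by rw [hfr z hz, sub_zero]
    _ ≤ M * ‖x - z‖ ^ γ := hhol x hx z (frontier_subset_closure hz)
    _ ≤ M * diam s ^ γ := by gcongr

variable [NormedSpace ℝ E]

theorem IsOpen.exists_lineMap_mem_frontier (hs : IsOpen s) (hb : IsBounded s) {x y : E}
    (hx : x ∈ s) (hxy : x ≠ y) : ∃ τ ≥ (1 : ℝ), lineMap y x τ ∈ frontier s := by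
  by_contra! h
  have hray : lineMap y x '' Ici (1 : ℝ) ⊆ s := by
    refine (isPreconnected_Ici.image _ lineMap_continuous.continuousOn).subset_left_of_subset_union
      hs isClosed_closure.isOpen_compl (disjoint_compl_right_iff_subset.2 subset_closure) ?_
      ⟨x, ⟨1, self_mem_Ici, lineMap_apply_one _ _⟩, hx⟩
    rintro _ ⟨τ, hτ, rfl⟩
    by_cases hc : lineMap y x τ ∈ closure s
    · exact .inl (by_contra fun hn => h τ hτ (hs.frontier_eq ▸ ⟨hc, hn⟩))
    · exact .inr hc
  -- but a ray is unbounded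
  have hd : 0 < dist y x := dist_pos.2 hxy.symm
  obtain ⟨R, hR⟩ := (hb.subset hray).subset_closedBall y
  have hτ := hR (mem_image_of_mem _ (le_max_left 1 ((R + 1) / dist y x) : _ ∈ Ici (1 : ℝ)))
  rw [mem_closedBall, dist_lineMap_left, Real.norm_of_nonneg (by positivity)] at hτ
  have := (div_le_iff₀ hd).1 (le_max_right 1 ((R + 1) / dist y x))
  linarith

theorem IsOpen.exists_mem_frontier_lineMap_eq (hs : IsOpen s) (hb : IsBounded s) {x y : E}
    (hx : x ∈ s) (hxy : x ≠ y) :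
    ∃ z ∈ frontier s, ∃ t ∈ Ioo (0 : ℝ) 1, lineMap y z t = x := by
  obtain ⟨τ, hτ1, hτ⟩ := hs.exists_lineMap_mem_frontier hb hx hxy
  have hτ1' : 1 < τ := by
    refine hτ1.lt_of_ne fun h => ?_
    rw [← h, lineMap_apply_one] at hτ
    exact (hs.inter_frontier_eq.subset ⟨hx, hτ⟩).elim
  refine ⟨_, hτ, τ⁻¹, ⟨by positivity, inv_lt_one_of_one_lt₀ hτ1'⟩, ?_⟩
  rw [lineMap_lineMap_right, inv_mul_cancel₀ (by positivity), lineMap_apply_one]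

theorem sub_le_mul_norm_rpow_of_convexOn_closure (hs : IsOpen s) (hb : IsBounded s)
    (hu : ConvexOn ℝ (closure s) u) (hfr : ∀ z ∈ frontier s, u z = 0) (hM : 0 ≤ M)
    (hγ0 : 0 ≤ γ) (hγ1 : γ ≤ 1) {x y : E} (hx : x ∈ s) (hy : y ∈ closure s)
    (huy : |u y| ≤ M * infDist y (frontier s) ^ γ) :
    u x - u y ≤ M * ‖x - y‖ ^ γ := by
  rcases eq_or_ne x y with rfl | hxy
  · rw [sub_self, sub_self, norm_zero]
    positivity
  obtain ⟨z, hz, t, ⟨ht0, ht1⟩, rfl⟩ := hs.exists_mem_frontier_lineMap_eq hb hx hxy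
  have hconv : u (lineMap y z t) ≤ (1 - t) * u y := by
    have := hu.2 hy (frontier_subset_closure hz) (show 0 ≤ 1 - t by linarith) ht0.le
      (sub_add_cancel 1 t)
    rwa [hfr z hz, smul_zero, add_zero, smul_eq_mul, ← lineMap_apply_module] at this
  have hdist : infDist y (frontier s) ≤ ‖z - y‖ := by
    simpa [dist_eq_norm'] using infDist_le_dist_of_mem (x := y) hz
  have hnorm : ‖lineMap y z t - y‖ = t * ‖z - y‖ := by
    rw [← dist_eq_norm, dist_lineMap_left, Real.norm_of_nonneg ht0.le, dist_eq_norm']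
  calc u (lineMap y z t) - u y ≤ t * |u y| := by nlinarith [neg_abs_le (u y)]
    _ ≤ t * (M * ‖z - y‖ ^ γ) := by
      refine mul_le_mul_of_nonneg_left (huy.trans ?_) ht0.le
      gcongr
      exact infDist_nonneg
    _ = M * (t * ‖z - y‖ ^ γ) := by ring
    _ ≤ M * (t ^ γ * ‖z - y‖ ^ γ) := by
      gcongr
      exact Real.self_le_rpow_of_le_one ht0.le ht1.le hγ1
    _ = M * ‖lineMap y z t - y‖ ^ γ := by rw [hnorm, Real.mul_rpow ht0.le (norm_nonneg _)]

end NormedAddCommGroup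

theorem convex_dist_power_bound_implies_holder_general
    (n : ℕ)
    (Ω : Set (EuclideanSpace ℝ (Fin n)))
    (hΩopen : IsOpen Ω)
    (hΩbdd : Bornology.IsBounded Ω)
    (γ M : ℝ) (hγ : γ ∈ Set.Ioc (0 : ℝ) 1) (hM : 0 < M)
    (u : EuclideanSpace ℝ (Fin n) → ℝ)
    (hu_cont : ContinuousOn u (closure Ω))
    (hu_conv : ConvexOn ℝ Ω u)
    (hu_bdry : ∀ x ∈ frontier Ω, u x = 0)
    (hu_bound : ∀ x ∈ Ω, |u x| ≤ M * Metric.infDist x (frontier Ω) ^ γ) :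
    (∀ x ∈ closure Ω, ∀ y ∈ closure Ω, |u x - u y| ≤ M * ‖x - y‖ ^ γ) ∧
      (∀ x ∈ closure Ω, |u x| ≤ M * Metric.diam Ω ^ γ) := by
  have hhalf : ∀ x ∈ Ω, ∀ y ∈ Ω, u x - u y ≤ M * ‖x - y‖ ^ γ := fun x hx y hy =>
    sub_le_mul_norm_rpow_of_convexOn_closure hΩopen hΩbdd (hu_conv.closure hu_cont) hu_bdry
      hM.le hγ.1.le hγ.2 hx (subset_closure hy) (hu_bound y hy)
  have hhol := abs_sub_le_mul_norm_rpow_on_closure hu_cont hγ.1.le fun x hx y hy =>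
    abs_sub_le_iff.2 ⟨hhalf x hx y hy, norm_sub_rev x y ▸ hhalf y hy x hx⟩
  exact ⟨hhol, fun x hx => abs_le_mul_diam_rpow hΩbdd hM.le hγ.1.le hhol hu_bdry hu_bound hx⟩

/-- Lemma 2.1: a convex function vanishing on the boundary with a power-of-distance
bound is Hölder continuous on the closure of the domain. -/
theorem convex_dist_power_bound_implies_holder
    (n : ℕ) (hn : 2 ≤ n)
    (Ω : Set (EuclideanSpace ℝ (Fin n)))
    (hΩopen : IsOpen Ω) (hΩconv : Convex ℝ Ω)
    (hΩbdd : Bornology.IsBounded Ω) (hΩne : Ω.Nonempty)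
    (γ M : ℝ) (hγ : γ ∈ Set.Ioc (0 : ℝ) 1) (hM : 0 < M)
    (u : EuclideanSpace ℝ (Fin n) → ℝ)
    (hu_cont : ContinuousOn u (closure Ω))
    (hu_conv : ConvexOn ℝ Ω u)
    (hu_bdry : ∀ x ∈ frontier Ω, u x = 0)
    (hu_bound : ∀ x ∈ Ω, |u x| ≤ M * Metric.infDist x (frontier Ω) ^ γ) :
    (∀ x ∈ closure Ω, ∀ y ∈ closure Ω, |u x - u y| ≤ M * ‖x - y‖ ^ γ) ∧
      (∀ x ∈ closure Ω, |u x| ≤ M * Metric.diam Ω ^ γ) :=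
  convex_dist_power_bound_implies_holder_general n Ω hΩopen hΩbdd γ M hγ hM u hu_cont hu_conv
    hu_bdry hu_bound
end

section
/- Let n ≥ 2, M > 0, N > 0, l > 0, γ > 0, and define W : ℝⁿ → ℝ by W(x) = −M·x_n^γ·√(N²l² − |x'|²), where x = (x', x_n) ∈ ℝ^{n−1} × ℝ and |x'| is the Euclidean norm of x'. Then at every point x with x_n > 0 and |x'| < N·l one has det D²W(x) = Mⁿ·N²·l²·γ·x_n^{nγ−2}·(N²l² − |x'|²)^{−n/2}·[1 − (1 + |x'|²/(N²l²))·γ], where det D²W denotes the determinant of the Hessian matrix of W. -/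
/-- The determinant of the Hessian matrix of `u` at `x`. -/
noncomputable def hessianDet {n : ℕ} (u : EuclideanSpace ℝ (Fin n) → ℝ)
    (x : EuclideanSpace ℝ (Fin n)) : ℝ :=
  (Matrix.of fun i j : Fin n =>
    iteratedFDeriv ℝ 2 u x ![EuclideanSpace.single i (1 : ℝ), EuclideanSpace.single j (1 : ℝ)]).det

/-- The last coordinate index of `Fin n`. -/
def lastIdx (n : ℕ) (hn : 0 < n) : Fin n := ⟨n - 1, Nat.sub_lt hn one_pos⟩

/-!
Write `W(x) = f(xₙ) g(|x'|²)` with `f(t) = -M t^γ` and `g(s) = √(N²l² - s)`. The Hessian of such a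
function is `a I + b x' x'ᵀ` on the `x'` block, bordered by `c x'` and `d`, where `a = 2 f g'`,
`b = 4 f g''`, `c = 2 f' g'`, `d = f'' g`. This is `a I` plus a rank-two matrix, so the
Weinstein–Aronszajn identity reduces its determinant to a `2 × 2` one:
`a^(n-2) ((a + b |x'|²) d - c² |x'|²)`, which for this `f` and `g` is the stated expression.
-/

open Finset Matrix Filter Topology

section Bordered

variable {ι 𝕜 : Type*} [Fintype ι] [DecidableEq ι] [Field 𝕜]

def sqNormOff (e : ι) (x : ι → 𝕜) : 𝕜 := ∑ j ∈ univ.erase e, x j ^ 2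

/-- `[[a I + b x' x'ᵀ, c x'], [c x'ᵀ, d]]`, bordered in row and column `e`, where `x'` is `x` off `e`. -/
def borderedMatrix (e : ι) (x : ι → 𝕜) (a b c d : 𝕜) : Matrix ι ι 𝕜 :=
  of fun i j => if i = e then (if j = e then d else c * x j)
    else if j = e then c * x i else (if i = j then a else 0) + b * x i * x j

theorem det_borderedMatrix (hι : 2 ≤ Fintype.card ι) (e : ι) (x : ι → 𝕜) {a : 𝕜} (ha : a ≠ 0)
    (b c d : 𝕜) :
    (borderedMatrix e x a b c d).det =
      a ^ (Fintype.card ι - 2) * ((a + b * sqNormOff e x) * d - c ^ 2 * sqNormOff e x) := by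
  set z : ι → 𝕜 := Function.update x e 0
  set ε : ι → 𝕜 := Pi.single e 1
  set U : Matrix ι (Fin 2) 𝕜 := of fun i l => ![z i, ε i] l
  set V : Matrix (Fin 2) ι 𝕜 := of fun k j => ![b • z + c • ε, c • z + (d - a) • ε] k j
  have hUV : borderedMatrix e x a b c d = a • (1 + (a⁻¹ • U) * V) := by
    rw [Matrix.smul_mul, smul_add, smul_smul, mul_inv_cancel₀ ha, one_smul]
    ext i j
    simp only [borderedMatrix, U, V, z, ε, Matrix.add_apply, Matrix.smul_apply, one_apply,
      mul_apply, Fin.sum_univ_two, of_apply, cons_val_zero, cons_val_one, Pi.add_apply,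
      Pi.smul_apply, Function.update_apply, Pi.single_apply, smul_eq_mul]
    split_ifs <;> simp_all <;> ring
  have hzz : ∑ i, z i * z i = sqNormOff e x := by
    rw [← add_sum_erase _ _ (mem_univ e), sqNormOff]
    simp only [z, Function.update_self, mul_zero, zero_add]
    exact sum_congr rfl fun j hj => by rw [Function.update_of_ne (ne_of_mem_erase hj), sq]
  have hzε : ∑ i, z i * ε i = 0 := by simp [z, ε, Pi.single_apply]
  have hεz : ∑ i, ε i * z i = 0 := by simp [z, ε, Pi.single_apply]
  have hεε : ∑ i, ε i * ε i = 1 := by simp [ε, Pi.single_apply]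
  clear_value z ε
  have hVU : V * U = !![b * sqNormOff e x, c; c * sqNormOff e x, d - a] := by
    ext k l
    fin_cases k <;> fin_cases l <;>
      simp [V, U, mul_apply, add_mul, sum_add_distrib, mul_assoc, ← mul_sum, hzz, hzε, hεz, hεε]
  obtain ⟨m, hm⟩ : ∃ m, Fintype.card ι = m + 2 := ⟨_, (Nat.sub_add_cancel hι).symm⟩
  rw [hUV, det_smul, det_one_add_mul_comm, Matrix.mul_smul, hVU, det_fin_two, hm]
  simp
  field_simp
  ring

end Bordered

theorem iteratedFDeriv_two_apply_of_eventually_hasFDerivAt {𝕜 E F : Type*}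
    [NontriviallyNormedField 𝕜] [NormedAddCommGroup E] [NormedSpace 𝕜 E]
    [NormedAddCommGroup F] [NormedSpace 𝕜 F] {u : E → F} {L : E → E →L[𝕜] F} {x : E}
    (hu : ∀ᶠ y in 𝓝 x, HasFDerivAt u (L y) y) (hL : DifferentiableAt 𝕜 L x) (v w : E) :
    iteratedFDeriv 𝕜 2 u x ![v, w] = fderiv 𝕜 (fun y => L y w) x v := by
  have hfd : fderiv 𝕜 u =ᶠ[𝓝 x] L := hu.mono fun y hy => hy.fderiv
  rw [iteratedFDeriv_two_apply, hfd.fderiv_eq, fderiv_clm_apply hL (differentiableAt_const w)]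
  simp

section Calculus

variable {ι : Type*} [Fintype ι] [DecidableEq ι] (e : ι)

local notation "𝔼" => EuclideanSpace ℝ ι

/-- The linear form `α dxₑ + β d(|x'|²)` at `y`. -/
noncomputable def sepForm (y : 𝔼) (α β : ℝ) : 𝔼 →L[ℝ] ℝ :=
  α • EuclideanSpace.proj e + β • ∑ j ∈ univ.erase e, (2 * y j) • EuclideanSpace.proj j

theorem sepForm_single (y : 𝔼) (α β : ℝ) (i : ι) :
    sepForm e y α β (EuclideanSpace.single i 1) = if i = e then α else β * (2 * y i) := by
  by_cases hi : i = e <;> simp [sepForm, hi]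

theorem hasFDerivAt_sqNormOff (y : 𝔼) :
    HasFDerivAt (fun z : 𝔼 => sqNormOff e z)
      (∑ j ∈ univ.erase e, (2 * y j) • (EuclideanSpace.proj j : 𝔼 →L[ℝ] ℝ)) y := by
  refine HasFDerivAt.fun_sum fun j _ => ?_
  simpa using ((EuclideanSpace.proj j : 𝔼 →L[ℝ] ℝ).hasFDerivAt (x := y)).pow 2

theorem hasFDerivAt_mul_sqNormOff {f g : ℝ → ℝ} {f' g' : ℝ} {y : 𝔼}
    (hf : HasDerivAt f f' (y e)) (hg : HasDerivAt g g' (sqNormOff e y)) :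
    HasFDerivAt (fun z : 𝔼 => f (z e) * g (sqNormOff e z))
      (sepForm e y (f' * g (sqNormOff e y)) (f (y e) * g')) y := by
  have h1 := hf.comp_hasFDerivAt y (EuclideanSpace.proj e : 𝔼 →L[ℝ] ℝ).hasFDerivAt
  have h2 := hg.comp_hasFDerivAt y (hasFDerivAt_sqNormOff e y)
  refine (h1.fun_mul h2).congr_fderiv ?_
  ext v
  simp [sepForm]
  ring

theorem iteratedFDeriv_two_mul_sqNormOff {f f' g g' : ℝ → ℝ} {f'' g'' : ℝ} {x : 𝔼}
    (hf : ∀ᶠ t in 𝓝 (x e), HasDerivAt f (f' t) t) (hf' : HasDerivAt f' f'' (x e))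
    (hg : ∀ᶠ s in 𝓝 (sqNormOff e x), HasDerivAt g (g' s) s)
    (hg' : HasDerivAt g' g'' (sqNormOff e x)) (i j : ι) :
    iteratedFDeriv ℝ 2 (fun y : 𝔼 => f (y e) * g (sqNormOff e y)) x
        ![EuclideanSpace.single i 1, EuclideanSpace.single j 1] =
      borderedMatrix e x (2 * f (x e) * g' (sqNormOff e x)) (4 * f (x e) * g'')
        (2 * f' (x e) * g' (sqNormOff e x)) (f'' * g (sqNormOff e x)) i j := by
  have hS : Continuous fun y : 𝔼 => sqNormOff e y :=
    continuous_iff_continuousAt.2 fun y => (hasFDerivAt_sqNormOff e y).continuousAt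
  have hu : ∀ᶠ y : 𝔼 in 𝓝 x, HasFDerivAt (fun y : 𝔼 => f (y e) * g (sqNormOff e y))
      (sepForm e y (f' (y e) * g (sqNormOff e y)) (f (y e) * g' (sqNormOff e y))) y := by
    filter_upwards [(EuclideanSpace.proj e : 𝔼 →L[ℝ] ℝ).continuous.continuousAt.eventually hf,
      hS.continuousAt.eventually hg] with y hfy hgy
    exact hasFDerivAt_mul_sqNormOff e hfy hgy
  have hL : DifferentiableAt ℝ (fun y : 𝔼 =>
      sepForm e y (f' (y e) * g (sqNormOff e y)) (f (y e) * g' (sqNormOff e y))) x := by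
    have hα := (hasFDerivAt_mul_sqNormOff e hf' hg.self_of_nhds).differentiableAt
    have hβ := (hasFDerivAt_mul_sqNormOff e hf.self_of_nhds hg').differentiableAt
    have hdS : DifferentiableAt ℝ
        (fun y : 𝔼 => ∑ j ∈ univ.erase e, (2 * y j) • (EuclideanSpace.proj j : 𝔼 →L[ℝ] ℝ)) x :=
      DifferentiableAt.fun_sum fun j _ =>
        ((EuclideanSpace.proj j : 𝔼 →L[ℝ] ℝ).differentiableAt.const_mul 2).smul_const _
    exact (hα.smul_const _).add (hβ.smul hdS)
  rw [iteratedFDeriv_two_apply_of_eventually_hasFDerivAt hu hL]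
  simp only [sepForm_single]
  by_cases hj : j = e
  · subst hj
    simp only [if_true]
    rw [(hasFDerivAt_mul_sqNormOff j hf' hg.self_of_nhds).fderiv, sepForm_single]
    by_cases hi : i = j <;> simp [borderedMatrix, hi]
    ring
  · simp only [hj, if_false]
    have h : HasFDerivAt (fun y : 𝔼 => f (y e) * g' (sqNormOff e y) * (2 * y j)) _ x :=
      (hasFDerivAt_mul_sqNormOff e hf.self_of_nhds hg').fun_mul
        (((EuclideanSpace.proj j : 𝔼 →L[ℝ] ℝ).hasFDerivAt (x := x)).const_mul 2)
    rw [h.fderiv]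
    by_cases hi : i = e
    · simp [sepForm, hi, hj, borderedMatrix]
      ring
    by_cases hij : i = j
    · subst hij
      simp [sepForm, hi, borderedMatrix]
      ring
    · simp [sepForm, hi, hj, hij, Ne.symm hij, borderedMatrix]
      ring

end Calculus

theorem hessianDet_mul_sqNormOff {n : ℕ} (hn : 2 ≤ n) (e : Fin n) {f f' g g' : ℝ → ℝ}
    {f'' g'' : ℝ} {x : EuclideanSpace ℝ (Fin n)}
    (hf : ∀ᶠ t in 𝓝 (x e), HasDerivAt f (f' t) t) (hf' : HasDerivAt f' f'' (x e))
    (hg : ∀ᶠ s in 𝓝 (sqNormOff e x), HasDerivAt g (g' s) s)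
    (hg' : HasDerivAt g' g'' (sqNormOff e x)) (ha : f (x e) * g' (sqNormOff e x) ≠ 0) :
    hessianDet (fun y : EuclideanSpace ℝ (Fin n) => f (y e) * g (sqNormOff e y)) x =
      (2 * f (x e) * g' (sqNormOff e x)) ^ (n - 2) *
        ((2 * f (x e) * g' (sqNormOff e x) + 4 * f (x e) * g'' * sqNormOff e x) *
            (f'' * g (sqNormOff e x)) -
          (2 * f' (x e) * g' (sqNormOff e x)) ^ 2 * sqNormOff e x) := by
  have hH : (of fun i j : Fin n =>
      iteratedFDeriv ℝ 2 (fun y : EuclideanSpace ℝ (Fin n) => f (y e) * g (sqNormOff e y)) x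
        ![EuclideanSpace.single i 1, EuclideanSpace.single j 1]) = borderedMatrix e x _ _ _ _ :=
    Matrix.ext fun i j => iteratedFDeriv_two_mul_sqNormOff e hf hf' hg hg' i j
  rw [hessianDet, hH, det_borderedMatrix (by simpa using hn) e x (by simpa [mul_assoc] using ha),
    Fintype.card_fin]

theorem hasDerivAt_sqrt_const_sub {K s : ℝ} (hs : s < K) :
    HasDerivAt (fun s => √(K - s)) (-1 / (2 * √(K - s))) s := by
  simpa using ((hasDerivAt_id s).const_sub K).sqrt (sub_pos.2 hs).ne'

theorem hasDerivAt_neg_one_div_two_sqrt_const_sub {K s : ℝ} (hs : s < K) :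
    HasDerivAt (fun s => -1 / (2 * √(K - s))) (-1 / (4 * √(K - s) ^ 3)) s := by
  have hr : 0 < √(K - s) := Real.sqrt_pos.2 (sub_pos.2 hs)
  refine ((hasDerivAt_const s (-1 : ℝ)).fun_div ((hasDerivAt_sqrt_const_sub hs).const_mul 2)
    (by positivity)).congr_deriv ?_
  field_simp
  ring

theorem rpow_neg_natCast_div_two {a : ℝ} (ha : 0 ≤ a) (n : ℕ) :
    a ^ (-(n : ℝ) / 2) = (√a ^ n)⁻¹ := by
  rw [neg_div, Real.rpow_neg ha, Real.sqrt_eq_rpow, ← Real.rpow_mul_natCast ha]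
  ring_nf

theorem hessianDet_neg_mul_rpow_mul_sqrt {n : ℕ} (hn : 2 ≤ n) (e : Fin n) {M : ℝ} (hM : M ≠ 0)
    (K γ : ℝ) {x : EuclideanSpace ℝ (Fin n)} (hx : 0 < x e) (hS : sqNormOff e x < K) :
    hessianDet (fun y : EuclideanSpace ℝ (Fin n) => -M * y e ^ γ * √(K - sqNormOff e y)) x =
      M ^ n * K * γ * x e ^ ((n : ℝ) * γ - 2) * (K - sqNormOff e x) ^ (-(n : ℝ) / 2) *
        (1 - (1 + sqNormOff e x / K) * γ) := by
  set S := sqNormOff e x with hSdef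
  have hf : ∀ᶠ t in 𝓝 (x e), HasDerivAt (fun t => -M * t ^ γ) (-M * (γ * t ^ (γ - 1))) t :=
    (eventually_gt_nhds hx).mono fun t ht =>
      (Real.hasDerivAt_rpow_const (Or.inl ht.ne')).const_mul (-M)
  have hf' : HasDerivAt (fun t => -M * (γ * t ^ (γ - 1)))
      (-M * (γ * ((γ - 1) * x e ^ (γ - 1 - 1)))) (x e) :=
    ((Real.hasDerivAt_rpow_const (Or.inl hx.ne')).const_mul γ).const_mul (-M)
  have hg : ∀ᶠ s in 𝓝 S, HasDerivAt (fun s => √(K - s)) (-1 / (2 * √(K - s))) s :=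
    (eventually_lt_nhds hS).mono fun s hs => hasDerivAt_sqrt_const_sub hs
  have hr : 0 < √(K - S) := Real.sqrt_pos.2 (sub_pos.2 hS)
  have ha : -M * x e ^ γ * (-1 / (2 * √(K - S))) ≠ 0 :=
    mul_ne_zero (mul_ne_zero (neg_ne_zero.2 hM) (Real.rpow_pos_of_pos hx γ).ne')
      (div_ne_zero (by norm_num) (by positivity))
  rw [hessianDet_mul_sqNormOff hn e hf hf' hg (hasDerivAt_neg_one_div_two_sqrt_const_sub hS) ha,
    ← hSdef, rpow_neg_natCast_div_two (sub_pos.2 hS).le]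
  have hK : K = √(K - S) ^ 2 + S := by rw [Real.sq_sqrt (sub_pos.2 hS).le]; ring
  have hK0 : K ≠ 0 := by
    have : 0 ≤ S := sum_nonneg fun j _ => sq_nonneg _
    linarith
  have ht1 : x e ^ (γ - 1) = x e ^ γ / x e := Real.rpow_sub_one hx.ne' γ
  have ht2 : x e ^ (γ - 1 - 1) = x e ^ γ / x e / x e := by rw [Real.rpow_sub_one hx.ne', ht1]
  have htn : x e ^ ((n : ℝ) * γ - 2) = (x e ^ γ) ^ n / x e ^ 2 := by
    rw [Real.rpow_sub hx, mul_comm, Real.rpow_mul_natCast hx.le, Real.rpow_two]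
  obtain ⟨m, rfl⟩ : ∃ m, n = m + 2 := ⟨n - 2, by omega⟩
  rw [ht1, ht2, htn, Nat.add_sub_cancel]
  set r := √(K - S)
  set T := x e ^ γ
  have ha' : 2 * (-M * T) * (-1 / (2 * r)) = M * T / r := by field_simp
  rw [ha', div_pow]
  field_simp
  rw [hK]
  ring

/-- Formula (2.5): the Hessian determinant of
`W(x) = -M xₙ^γ √(N²l² - |x'|²)` at points where `xₙ > 0` and `|x'| < N l`. -/
theorem hessianDet_subsolution_candidate
    (n : ℕ) (hn : 2 ≤ n) (M N l γ : ℝ) (hM : 0 < M) :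
    ∀ x : EuclideanSpace ℝ (Fin n),
      0 < x (lastIdx n (by omega)) →
      Real.sqrt (∑ j ∈ Finset.univ.erase (lastIdx n (by omega)), x j ^ 2) < N * l →
      hessianDet
          (fun y : EuclideanSpace ℝ (Fin n) =>
            -M * y (lastIdx n (by omega)) ^ γ *
              Real.sqrt
                (N ^ 2 * l ^ 2 - ∑ j ∈ Finset.univ.erase (lastIdx n (by omega)), y j ^ 2)) x =
        M ^ n * N ^ 2 * l ^ 2 * γ * x (lastIdx n (by omega)) ^ ((n : ℝ) * γ - 2) *
          (N ^ 2 * l ^ 2 - ∑ j ∈ Finset.univ.erase (lastIdx n (by omega)), x j ^ 2) ^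
            (-(n : ℝ) / 2) *
          (1 - (1 + (∑ j ∈ Finset.univ.erase (lastIdx n (by omega)), x j ^ 2) /
            (N ^ 2 * l ^ 2)) * γ) := by
  intro x hx hx'
  have hS : sqNormOff (lastIdx n (by omega)) x < N ^ 2 * l ^ 2 := by
    rw [← mul_pow, ← Real.sqrt_lt' ((Real.sqrt_nonneg _).trans_lt hx')]
    exact hx'
  rw [mul_assoc (M ^ n)]
  exact hessianDet_neg_mul_rpow_mul_sqrt hn _ hM.ne' _ γ hx hS
end

section
/- Let a ≥ 1, b > 0, ε > 0 and n ≥ 2, and define W(x) = −((x_n/ε)^{2/a} − |x'|²)^{1/b} on the region where x_n > 0 and (x_n/ε)^{2/a} > |x'|². Writing r = |x'| and denoting by W_{rr}, W_{rn}, W_{nn} the second partial derivatives of W with respect to r and x_n (viewing W as a function of (r, x_n)), at every point of this region one has W_{rr}·W_{nn} − (W_{rn})² = (8(a−2)(b−1)/(a²b³))·|W|^{2−3b}·(x_n/ε)^{2/a−2}·r²·ε^{−2} + (8(b−1)/(a²b³))·|W|^{2−3b}·(x_n/ε)^{4/a−2}·ε^{−2} + (4(a−2)/(a²b²))·|W|^{2−2b}·(x_n/ε)^{2/a−2}·ε^{−2}.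 -/
/-!
Write `W = -u ^ q` with `u = (s / ε) ^ p - r ^ 2`, `p = 2 / a`, `q = 1 / b`. Since `u` is a sum of a
function of `s` and a function of `r`, the chain rule gives
`W_rr = φ'' u_r² + φ' u_rr`, `W_ss = φ'' u_s² + φ' u_ss`, `W_rs = φ'' u_r u_s` for `φ(u) = -u ^ q`,
so the `φ''²` terms cancel in `W_rr W_ss - W_rs²`. What remains is `φ' φ'' (u_r² u_ss + u_s² u_rr)
+ φ'² u_rr u_ss`, and `φ' φ'' ∝ u ^ (2q - 3) = |W| ^ (2 - 3b)`, `φ'² ∝ u ^ (2q - 2) = |W| ^ (2 - 2b)`.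
-/

open Real Filter Topology

section RpowComp

variable {g g' : ℝ → ℝ} {x q : ℝ}

theorem eventuallyEq_deriv_rpow_const (hg : ∀ᶠ y in 𝓝 x, HasDerivAt g (g' y) y) (hx : 0 < g x) :
    deriv (fun y => g y ^ q) =ᶠ[𝓝 x] fun y => g' y * q * g y ^ (q - 1) := by
  have hpos : ∀ᶠ y in 𝓝 x, 0 < g y := hg.self_of_nhds.continuousAt.eventually (lt_mem_nhds hx)
  filter_upwards [hg, hpos] with y hy hy0
  exact (hy.rpow_const (Or.inl hy0.ne')).deriv

theorem iteratedDeriv_two_rpow_const {g'' : ℝ} (hg : ∀ᶠ y in 𝓝 x, HasDerivAt g (g' y) y)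
    (hg' : HasDerivAt g' g'' x) (hx : 0 < g x) :
    iteratedDeriv 2 (fun y => g y ^ q) x =
      q * (g'' * g x ^ (q - 1) + (q - 1) * g' x ^ 2 * g x ^ (q - 2)) := by
  rw [iteratedDeriv_succ, iteratedDeriv_one, (eventuallyEq_deriv_rpow_const hg hx).deriv_eq]
  have hgq := hg.self_of_nhds.rpow_const (p := q - 1) (Or.inl hx.ne')
  rw [show q - 1 - 1 = q - 2 by ring] at hgq
  exact ((hg'.mul_const q).mul hgq).deriv.trans (by ring)

end RpowComp

theorem hasDerivAt_div_const_rpow {c p y : ℝ} (hy : y / c ≠ 0) :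
    HasDerivAt (fun z => (z / c) ^ p) (p / c * (y / c) ^ (p - 1)) y := by
  have h := ((hasDerivAt_id y).div_const c).rpow_const (p := p) (Or.inl hy)
  exact h.congr_deriv (by simp only [id]; ring)

theorem hasDerivAt_neg_rpow_sub_sq {A q r : ℝ} (hr : r ^ 2 < A) :
    HasDerivAt (fun r' => -(A - r' ^ 2) ^ q) (2 * r * q * (A - r ^ 2) ^ (q - 1)) r := by
  have h := (((hasDerivAt_pow 2 r).const_sub A).rpow_const (p := q) (Or.inl (sub_pos.2 hr).ne')).neg
  exact h.congr_deriv (by push_cast; ring)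

theorem iteratedDeriv_two_neg_rpow_sub_sq {A q r : ℝ} (hr : r ^ 2 < A) :
    iteratedDeriv 2 (fun r' => -(A - r' ^ 2) ^ q) r =
      2 * q * (A - r ^ 2) ^ (q - 1) - 4 * q * (q - 1) * r ^ 2 * (A - r ^ 2) ^ (q - 2) := by
  have hg : ∀ y, HasDerivAt (fun r' => A - r' ^ 2) (-(2 * y)) y := fun y => by
    simpa using (hasDerivAt_pow 2 y).const_sub A
  have hg' : HasDerivAt (fun y => -(2 * y)) (-2) r := by
    simpa using ((hasDerivAt_id r).const_mul 2).fun_neg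
  rw [iteratedDeriv_fun_neg,
    iteratedDeriv_two_rpow_const (Eventually.of_forall hg) hg' (sub_pos.2 hr)]
  ring

section DivConstRpow

variable {c p q B s : ℝ}

theorem iteratedDeriv_two_neg_div_const_rpow_sub_rpow (hs : s ≠ 0) (hc : c ≠ 0)
    (hB : B < (s / c) ^ p) :
    iteratedDeriv 2 (fun s' => -((s' / c) ^ p - B) ^ q) s =
      -(q * (p / c * ((p - 1) / c * (s / c) ^ (p - 2)) * ((s / c) ^ p - B) ^ (q - 1) +
        (q - 1) * (p / c * (s / c) ^ (p - 1)) ^ 2 * ((s / c) ^ p - B) ^ (q - 2))) := by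
  have hg : ∀ᶠ y in 𝓝 s, HasDerivAt (fun z => (z / c) ^ p - B) (p / c * (y / c) ^ (p - 1)) y := by
    filter_upwards [eventually_ne_nhds hs] with y hy
    exact (hasDerivAt_div_const_rpow (div_ne_zero hy hc)).sub_const B
  have hg' := (hasDerivAt_div_const_rpow (p := p - 1) (div_ne_zero hs hc)).const_mul (p / c)
  rw [show p - 1 - 1 = p - 2 by ring] at hg'
  rw [iteratedDeriv_fun_neg, iteratedDeriv_two_rpow_const hg hg' (sub_pos.2 hB)]

theorem deriv_deriv_neg_div_const_rpow_sub_sq {r : ℝ} (hs : s ≠ 0) (hc : c ≠ 0)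
    (hr : r ^ 2 < (s / c) ^ p) :
    deriv (fun s' => deriv (fun r' => -((s' / c) ^ p - r' ^ 2) ^ q) r) s =
      2 * r * q * ((q - 1) * (p / c * (s / c) ^ (p - 1)) * ((s / c) ^ p - r ^ 2) ^ (q - 2)) := by
  have hu := (hasDerivAt_div_const_rpow (p := p) (div_ne_zero hs hc)).sub_const (r ^ 2)
  have hpos : ∀ᶠ s' in 𝓝 s, 0 < (s' / c) ^ p - r ^ 2 :=
    hu.continuousAt.eventually (lt_mem_nhds (sub_pos.2 hr))
  have hinner : (fun s' => deriv (fun r' => -((s' / c) ^ p - r' ^ 2) ^ q) r) =ᶠ[𝓝 s]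
      fun s' => 2 * r * q * ((s' / c) ^ p - r ^ 2) ^ (q - 1) := by
    filter_upwards [hpos] with s' hs'
    exact (hasDerivAt_neg_rpow_sub_sq (sub_pos.1 hs')).deriv
  have houter := (hu.rpow_const (p := q - 1) (Or.inl (sub_pos.2 hr).ne')).const_mul (2 * r * q)
  rw [show q - 1 - 1 = q - 2 by ring] at houter
  rw [hinner.deriv_eq, houter.deriv]
  ring

end DivConstRpow

theorem radial_second_derivative_identity_general
    (a b ε : ℝ) (ha : 1 ≤ a) (hb : 0 < b) (hε : 0 < ε) :
    ∀ r s : ℝ, 0 ≤ r → 0 < s → r ^ 2 < (s / ε) ^ (2 / a) →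
      iteratedDeriv 2 (fun r' : ℝ => -(((s / ε) ^ (2 / a) - r' ^ 2) ^ (1 / b))) r *
          iteratedDeriv 2 (fun s' : ℝ => -(((s' / ε) ^ (2 / a) - r ^ 2) ^ (1 / b))) s -
        (deriv (fun s' : ℝ =>
            deriv (fun r' : ℝ => -(((s' / ε) ^ (2 / a) - r' ^ 2) ^ (1 / b))) r) s) ^ 2 =
      8 * (a - 2) * (b - 1) / (a ^ 2 * b ^ 3) *
          (((s / ε) ^ (2 / a) - r ^ 2) ^ (1 / b)) ^ (2 - 3 * b) *
          (s / ε) ^ (2 / a - 2) * r ^ 2 * (1 / ε) ^ 2 +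
        8 * (b - 1) / (a ^ 2 * b ^ 3) *
          (((s / ε) ^ (2 / a) - r ^ 2) ^ (1 / b)) ^ (2 - 3 * b) *
          (s / ε) ^ (4 / a - 2) * (1 / ε) ^ 2 +
        4 * (a - 2) / (a ^ 2 * b ^ 2) *
          (((s / ε) ^ (2 / a) - r ^ 2) ^ (1 / b)) ^ (2 - 2 * b) *
          (s / ε) ^ (2 / a - 2) * (1 / ε) ^ 2 := by
  intro r s _ hs hr
  have hu : 0 < (s / ε) ^ (2 / a) - r ^ 2 := sub_pos.2 hr
  have ht : 0 < s / ε := div_pos hs hε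
  have hW3 : (((s / ε) ^ (2 / a) - r ^ 2) ^ (1 / b)) ^ (2 - 3 * b) =
      ((s / ε) ^ (2 / a) - r ^ 2) ^ (1 / b - 1) * ((s / ε) ^ (2 / a) - r ^ 2) ^ (1 / b - 2) := by
    rw [← rpow_mul hu.le, ← rpow_add hu]
    congr 1
    field_simp
    ring
  have hW2 : (((s / ε) ^ (2 / a) - r ^ 2) ^ (1 / b)) ^ (2 - 2 * b) =
      (((s / ε) ^ (2 / a) - r ^ 2) ^ (1 / b - 1)) ^ 2 := by
    rw [← rpow_mul hu.le, ← rpow_mul_natCast hu.le]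
    congr 1
    field_simp
    ring
  have ht4 : (s / ε) ^ (4 / a - 2) = ((s / ε) ^ (2 / a - 1)) ^ 2 := by
    rw [← rpow_mul_natCast ht.le]
    ring_nf
  rw [iteratedDeriv_two_neg_rpow_sub_sq hr,
    iteratedDeriv_two_neg_div_const_rpow_sub_rpow hs.ne' hε.ne' hr,
    deriv_deriv_neg_div_const_rpow_sub_sq hs.ne' hε.ne' hr, hW3, hW2, ht4]
  have ha0 : a ≠ 0 := (zero_lt_one.trans_le ha).ne'
  field_simp
  ring

/-- Formula (3.6): for `W(r,s) = -((s/ε)^{2/a} - r²)^{1/b}` (with `r = |x'|`, `s = xₙ`),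
the expression `W_{rr} W_{nn} - W_{rn}²` at points of the region `s > 0`,
`(s/ε)^{2/a} > r²`. -/
theorem radial_second_derivative_identity
    (n : ℕ) (hn : 2 ≤ n) (a b ε : ℝ) (ha : 1 ≤ a) (hb : 0 < b) (hε : 0 < ε) :
    ∀ r s : ℝ, 0 ≤ r → 0 < s → r ^ 2 < (s / ε) ^ (2 / a) →
      iteratedDeriv 2 (fun r' : ℝ => -(((s / ε) ^ (2 / a) - r' ^ 2) ^ (1 / b))) r *
          iteratedDeriv 2 (fun s' : ℝ => -(((s' / ε) ^ (2 / a) - r ^ 2) ^ (1 / b))) s -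
        (deriv (fun s' : ℝ =>
            deriv (fun r' : ℝ => -(((s' / ε) ^ (2 / a) - r' ^ 2) ^ (1 / b))) r) s) ^ 2 =
      8 * (a - 2) * (b - 1) / (a ^ 2 * b ^ 3) *
          (((s / ε) ^ (2 / a) - r ^ 2) ^ (1 / b)) ^ (2 - 3 * b) *
          (s / ε) ^ (2 / a - 2) * r ^ 2 * (1 / ε) ^ 2 +
        8 * (b - 1) / (a ^ 2 * b ^ 3) *
          (((s / ε) ^ (2 / a) - r ^ 2) ^ (1 / b)) ^ (2 - 3 * b) *
          (s / ε) ^ (4 / a - 2) * (1 / ε) ^ 2 +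
        4 * (a - 2) / (a ^ 2 * b ^ 2) *
          (((s / ε) ^ (2 / a) - r ^ 2) ^ (1 / b)) ^ (2 - 2 * b) *
          (s / ε) ^ (2 / a - 2) * (1 / ε) ^ 2 :=
  radial_second_derivative_identity_general a b ε ha hb hε
end

section
/- Let n ≥ 2, M > 0, b > 0, R > 0 and y₀ ∈ ℝⁿ, and define W(x) = −M·(R² − |x − y₀|²)^b on the open ball B_R(y₀). Then at every x ∈ B_R(y₀), writing r = |x − y₀|, one has det D²W(x) = (2Mb)ⁿ·(R² − r²)^{n(b−1)−1}·(R² − (2b−1)·r²), where det D²W denotes the determinant of the Hessian matrix of W. -/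
/-!
Write `W y = φ (‖y - y₀‖ ^ 2)` with `φ t = -M (R² - t)^b`. Differentiating twice, the Hessian of
`W` at `x` is `2 φ'(t) I + 4 φ''(t) u uᵀ` with `u = x - y₀`, `t = ‖u‖²`: a multiple of the identity
plus a rank-one matrix, whose determinant is `(2 φ')ⁿ (1 + 2 φ'' t / φ')` by the matrix
determinant lemma.
-/

open scoped RealInnerProductSpace Topology Matrix

theorem hasDerivAt_const_sub_rpow {a p t : ℝ} (h : t < a) :
    HasDerivAt (fun τ => (a - τ) ^ p) (-(p * (a - t) ^ (p - 1))) t := by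
  simpa using ((hasDerivAt_id t).const_sub a).rpow_const (p := p) (Or.inl (sub_pos.2 h).ne')

section Radial

variable {E : Type*} [NormedAddCommGroup E] [InnerProductSpace ℝ E] {φ : ℝ → ℝ} {y₀ x : E}

theorem HasDerivAt.hasFDerivAt_comp_norm_sub_sq {φ' : ℝ} (h : HasDerivAt φ φ' (‖x - y₀‖ ^ 2)) :
    HasFDerivAt (fun y => φ (‖y - y₀‖ ^ 2)) ((2 * φ') • innerSL ℝ (x - y₀)) x := by
  have hsq : HasFDerivAt (fun y => ‖y - y₀‖ ^ 2) ((2 : ℝ) • innerSL ℝ (x - y₀)) x := by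
    simpa [ofNat_smul_eq_nsmul] using ((hasFDerivAt_id x).sub_const y₀).norm_sq
  exact (h.comp_hasFDerivAt x hsq).congr_fderiv (by rw [smul_smul, mul_comm])

theorem fderiv_fderiv_comp_norm_sub_sq_apply {φ' : ℝ → ℝ} {φ'' : ℝ}
    (hφ : ∀ᶠ t in 𝓝 (‖x - y₀‖ ^ 2), HasDerivAt φ (φ' t) t)
    (hφ' : HasDerivAt φ' φ'' (‖x - y₀‖ ^ 2)) (v w : E) :
    fderiv ℝ (fderiv ℝ fun y => φ (‖y - y₀‖ ^ 2)) x v w =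
      2 * φ' (‖x - y₀‖ ^ 2) * ⟪v, w⟫ + 4 * φ'' * ⟪x - y₀, v⟫ * ⟪x - y₀, w⟫ := by
  have hgrad : fderiv ℝ (fun y => φ (‖y - y₀‖ ^ 2)) =ᶠ[𝓝 x]
      fun y => (2 * φ' (‖y - y₀‖ ^ 2)) • innerSL ℝ (y - y₀) := by
    have hcont : ContinuousAt (fun y : E => ‖y - y₀‖ ^ 2) x := by fun_prop
    filter_upwards [hcont.eventually hφ] with y hy
    exact hy.hasFDerivAt_comp_norm_sub_sq.fderiv
  have hinner : HasFDerivAt (fun y => innerSL ℝ (y - y₀)) (innerSL ℝ : E →L[ℝ] E →L[ℝ] ℝ) x :=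
    (innerSL ℝ : E →L[ℝ] E →L[ℝ] ℝ).hasFDerivAt.comp x ((hasFDerivAt_id x).sub_const y₀)
  rw [hgrad.fderiv_eq, ((hφ'.const_mul 2).hasFDerivAt_comp_norm_sub_sq.fun_smul hinner).fderiv]
  simp only [add_apply, FunLike.coe_smul, Pi.smul_apply,
    ContinuousLinearMap.smulRight_apply, innerSL_apply_apply, smul_eq_mul]
  rw [innerSL_apply_apply]
  ring

end Radial

theorem Matrix.det_smul_one_add_vecMulVec {ι K : Type*} [Fintype ι] [DecidableEq ι] [Field K]
    {c : K} (hc : c ≠ 0) (u v : ι → K) :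
    (c • (1 : Matrix ι ι K) + vecMulVec u v).det = c ^ Fintype.card ι * (1 + v ⬝ᵥ u / c) := by
  have hfactor : c • (1 : Matrix ι ι K) + vecMulVec u v =
      c • (1 + replicateCol Unit (c⁻¹ • u) * replicateRow Unit v) := by
    rw [← vecMulVec_eq, smul_add]
    ext i j
    simp [vecMulVec_apply, hc]
  rw [hfactor, det_smul, det_one_add_replicateCol_mul_replicateRow, dotProduct_smul, smul_eq_mul,
    div_eq_inv_mul]

theorem hessianDet_comp_norm_sub_sq {n : ℕ} {φ φ' : ℝ → ℝ} {φ'' : ℝ}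
    {y₀ x : EuclideanSpace ℝ (Fin n)}
    (hφ : ∀ᶠ t in 𝓝 (‖x - y₀‖ ^ 2), HasDerivAt φ (φ' t) t)
    (hφ' : HasDerivAt φ' φ'' (‖x - y₀‖ ^ 2)) (h0 : φ' (‖x - y₀‖ ^ 2) ≠ 0) :
    hessianDet (fun y => φ (‖y - y₀‖ ^ 2)) x =
      (2 * φ' (‖x - y₀‖ ^ 2)) ^ n * (1 + 2 * φ'' * ‖x - y₀‖ ^ 2 / φ' (‖x - y₀‖ ^ 2)) := by
  set u := (x - y₀).ofLp
  have hmat : (Matrix.of fun i j : Fin n => iteratedFDeriv ℝ 2 (fun y => φ (‖y - y₀‖ ^ 2)) x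
      ![EuclideanSpace.single i (1 : ℝ), EuclideanSpace.single j (1 : ℝ)]) =
      (2 * φ' (‖x - y₀‖ ^ 2)) • 1 + Matrix.vecMulVec ((4 * φ'') • u) u := by
    ext i j
    rw [Matrix.of_apply, iteratedFDeriv_two_apply, fderiv_fderiv_comp_norm_sub_sq_apply hφ hφ']
    simp [Matrix.one_apply, Matrix.vecMulVec_apply, EuclideanSpace.inner_single_right, u,
      eq_comm (a := j), mul_assoc]
  have hdot : u ⬝ᵥ (4 * φ'') • u = 4 * φ'' * ‖x - y₀‖ ^ 2 := by
    rw [dotProduct_smul, smul_eq_mul, ← real_inner_self_eq_norm_sq,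
      EuclideanSpace.inner_eq_star_dotProduct, star_trivial]
  rw [hessianDet, hmat, Matrix.det_smul_one_add_vecMulVec (mul_ne_zero two_ne_zero h0),
    Fintype.card_fin, hdot]
  field_simp
  ring

theorem hessianDet_radial_power_general
    (n : ℕ) (M b R : ℝ) (hM : 0 < M) (hb : 0 < b)
    (y₀ : EuclideanSpace ℝ (Fin n)) :
    ∀ x ∈ Metric.ball y₀ R,
      hessianDet (fun y : EuclideanSpace ℝ (Fin n) => -M * (R ^ 2 - ‖y - y₀‖ ^ 2) ^ b) x =
        (2 * M * b) ^ n * (R ^ 2 - ‖x - y₀‖ ^ 2) ^ ((n : ℝ) * (b - 1) - 1) *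
          (R ^ 2 - (2 * b - 1) * ‖x - y₀‖ ^ 2) := by
  intro x hx
  have hlt : ‖x - y₀‖ ^ 2 < R ^ 2 := by
    rw [mem_ball_iff_norm] at hx
    exact pow_lt_pow_left₀ hx (norm_nonneg _) two_ne_zero
  have hφ : ∀ᶠ t in 𝓝 (‖x - y₀‖ ^ 2),
      HasDerivAt (fun τ => -M * (R ^ 2 - τ) ^ b) (M * b * (R ^ 2 - t) ^ (b - 1)) t := by
    filter_upwards [eventually_lt_nhds hlt] with t ht
    exact ((hasDerivAt_const_sub_rpow ht).const_mul (-M)).congr_deriv (by ring)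
  have hφ' := (hasDerivAt_const_sub_rpow (p := b - 1) hlt).const_mul (M * b)
  have hpos : 0 < R ^ 2 - ‖x - y₀‖ ^ 2 := sub_pos.2 hlt
  rw [hessianDet_comp_norm_sub_sq hφ hφ' (by positivity)]
  set t := ‖x - y₀‖ ^ 2
  set s := R ^ 2 - t with hs_def
  rw [Real.rpow_sub_one hpos.ne' ((n : ℝ) * (b - 1)), mul_comm (n : ℝ),
    Real.rpow_mul_natCast hpos.le, Real.rpow_sub_one hpos.ne' (b - 1),
    show R ^ 2 = s + t by rw [hs_def]; ring]
  field_simp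
  ring

/-- Formula (4.4): the Hessian determinant of `W(x) = -M (R² - |x-y₀|²)^b` on
the open ball `B_R(y₀)`. -/
theorem hessianDet_radial_power
    (n : ℕ) (hn : 2 ≤ n) (M b R : ℝ) (hM : 0 < M) (hb : 0 < b) (hR : 0 < R)
    (y₀ : EuclideanSpace ℝ (Fin n)) :
    ∀ x ∈ Metric.ball y₀ R,
      hessianDet (fun y : EuclideanSpace ℝ (Fin n) => -M * (R ^ 2 - ‖y - y₀‖ ^ 2) ^ b) x =
        (2 * M * b) ^ n * (R ^ 2 - ‖x - y₀‖ ^ 2) ^ ((n : ℝ) * (b - 1) - 1) *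
          (R ^ 2 - (2 * b - 1) * ‖x - y₀‖ ^ 2) :=
  hessianDet_radial_power_general n M b R hM hb y₀
end

section
/- Let n ≥ 2, A > 0, α ≥ 0, R > 0, y₀ ∈ ℝⁿ, and let β satisfy β ≥ n + α + 1. Then there exists M > 0 (depending only on A, R, α, n and β) such that the function W(x) = −M·(R² − |x − y₀|²) satisfies det D²W(x) ≥ A·(R − |x − y₀|)^{β−n−1}·|W(x)|^{−α} at every x ∈ B_R(y₀). -/
/-!
`W` is a paraboloid, so `D²W = 2M·I` and `det D²W = (2M)ⁿ` is constant. With `r = |x - y₀| < R`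
and `M ≥ 1`, `|W| = M (R - r)(R + r) ≥ R (R - r)`, so the weight `A (R - r)^{β-n-1} |W|^{-α}` is at
most `A R^{-α} (R - r)^{β-n-1-α} ≤ A R^{β-n-1-2α}`, using `β - n - 1 ≥ α`. Hence
`M = max 1 (A R^{β-n-1-2α})` works.
-/

open scoped RealInnerProductSpace

section
variable {E : Type*} [NormedAddCommGroup E] [InnerProductSpace ℝ E]

theorem hasFDerivAt_paraboloid (a b : ℝ) (y₀ y : E) :
    HasFDerivAt (fun y => a * ‖y - y₀‖ ^ 2 + b) ((2 * a) • innerSL ℝ (y - y₀)) y := by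
  refine ((((hasFDerivAt_id y).sub_const y₀).norm_sq.const_mul a).add_const b).congr_fderiv ?_
  ext v
  simp only [id_eq, map_sub, ContinuousLinearMap.comp_id, smul_apply, sub_apply, coe_innerSL_apply,
    nsmul_eq_mul, Nat.cast_ofNat, smul_eq_mul]
  ring

theorem iteratedFDeriv_two_paraboloid (a b : ℝ) (y₀ x v w : E) :
    iteratedFDeriv ℝ 2 (fun y => a * ‖y - y₀‖ ^ 2 + b) x ![v, w] = 2 * a * ⟪v, w⟫ := by
  have hD : fderiv ℝ (fun y => a * ‖y - y₀‖ ^ 2 + b) = fun y => (2 * a) • innerSL ℝ (y - y₀) :=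
    funext fun y => (hasFDerivAt_paraboloid a b y₀ y).fderiv
  have hD2 : HasFDerivAt (fun y => (2 * a) • innerSL ℝ (y - y₀)) ((2 * a) • innerSL ℝ) x :=
    ((2 * a) • innerSL ℝ (E := E)).hasFDerivAt.comp x ((hasFDerivAt_id x).sub_const y₀)
  rw [iteratedFDeriv_two_apply, hD, hD2.fderiv]
  rfl

end

theorem hessianDet_paraboloid {n : ℕ} (a b : ℝ) (y₀ x : EuclideanSpace ℝ (Fin n)) :
    hessianDet (fun y => a * ‖y - y₀‖ ^ 2 + b) x = (2 * a) ^ n := by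
  have : (Matrix.of fun i j : Fin n => iteratedFDeriv ℝ 2 (fun y => a * ‖y - y₀‖ ^ 2 + b) x
      ![EuclideanSpace.single i (1 : ℝ), EuclideanSpace.single j (1 : ℝ)])
      = Matrix.diagonal fun _ => 2 * a := by
    ext i j
    simp [iteratedFDeriv_two_paraboloid, EuclideanSpace.inner_single_left, Matrix.diagonal_apply]
  rw [hessianDet, this, Matrix.det_diagonal, Finset.prod_const, Finset.card_univ, Fintype.card_fin]

theorem mul_rpow_mul_rpow_neg_le {A α γ M R r : ℝ} (hA : 0 ≤ A) (hα : 0 ≤ α) (hαγ : α ≤ γ)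
    (hM : 1 ≤ M) (hr : 0 ≤ r) (hrR : r < R) :
    A * (R - r) ^ γ * (M * (R ^ 2 - r ^ 2)) ^ (-α) ≤ A * R ^ (γ - 2 * α) := by
  have hR : 0 < R := hr.trans_lt hrR
  have hRr : 0 < R - r := sub_pos.mpr hrR
  have hW : R * (R - r) ≤ M * (R ^ 2 - r ^ 2) :=
    calc R * (R - r) ≤ (R + r) * (R - r) := by gcongr; linarith
      _ = R ^ 2 - r ^ 2 := by ring
      _ ≤ M * (R ^ 2 - r ^ 2) := le_mul_of_one_le_left (by nlinarith) hM
  calc A * (R - r) ^ γ * (M * (R ^ 2 - r ^ 2)) ^ (-α)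
      ≤ A * (R - r) ^ γ * (R * (R - r)) ^ (-α) := by
        refine mul_le_mul_of_nonneg_left ?_ (by positivity)
        exact Real.rpow_le_rpow_of_nonpos (by positivity) hW (neg_nonpos.mpr hα)
    _ = A * R ^ (-α) * (R - r) ^ (γ - α) := by
        rw [Real.mul_rpow hR.le hRr.le, sub_eq_add_neg γ, Real.rpow_add hRr]
        ring
    _ ≤ A * R ^ (-α) * R ^ (γ - α) := by
        gcongr
        linarith
    _ = A * R ^ (γ - 2 * α) := by
        rw [mul_assoc, ← Real.rpow_add hR]
        ring_nf

theorem exists_subsolution_ball_linear_case_general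
    (n : ℕ) (hn : 2 ≤ n) (A α R β : ℝ) (hA : 0 < A) (hα : 0 ≤ α)
    (y₀ : EuclideanSpace ℝ (Fin n)) (hβ : (n : ℝ) + α + 1 ≤ β) :
    ∃ M : ℝ, 0 < M ∧
      ∀ x ∈ Metric.ball y₀ R,
        A * (R - ‖x - y₀‖) ^ (β - n - 1) * |-M * (R ^ 2 - ‖x - y₀‖ ^ 2)| ^ (-α)
          ≤ hessianDet (fun y : EuclideanSpace ℝ (Fin n) =>
              -M * (R ^ 2 - ‖y - y₀‖ ^ 2)) x := by
  set M := max 1 (A * R ^ (β - n - 1 - 2 * α))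
  have hM : 1 ≤ M := le_max_left _ _
  refine ⟨M, by positivity, fun x hx => ?_⟩
  have hxR : ‖x - y₀‖ < R := mem_ball_iff_norm.mp hx
  have hW : (fun y : EuclideanSpace ℝ (Fin n) => -M * (R ^ 2 - ‖y - y₀‖ ^ 2))
      = fun y => M * ‖y - y₀‖ ^ 2 + -M * R ^ 2 := by
    funext y; ring
  have habs : |-M * (R ^ 2 - ‖x - y₀‖ ^ 2)| = M * (R ^ 2 - ‖x - y₀‖ ^ 2) := by
    rw [neg_mul, abs_neg, abs_of_nonneg]
    exact mul_nonneg (by linarith) (by nlinarith [norm_nonneg (x - y₀)])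
  rw [hW, hessianDet_paraboloid, habs]
  calc _ ≤ A * R ^ (β - n - 1 - 2 * α) :=
        mul_rpow_mul_rpow_neg_le hA.le hα (by linarith) hM (norm_nonneg _) hxR
    _ ≤ M := le_max_right _ _
    _ ≤ 2 * M := by linarith
    _ ≤ (2 * M) ^ n := le_self_pow₀ (by linarith) (by omega)

/-- For `β ≥ n+α+1`, there is `M > 0` such that `W(x) = -M (R² - |x-y₀|²)` satisfies
`det D²W ≥ A (R - |x-y₀|)^{β-n-1} |W|^{-α}` on `B_R(y₀)`. -/
theorem exists_subsolution_ball_linear_case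
    (n : ℕ) (hn : 2 ≤ n) (A α R β : ℝ) (hA : 0 < A) (hα : 0 ≤ α) (hR : 0 < R)
    (y₀ : EuclideanSpace ℝ (Fin n)) (hβ : (n : ℝ) + α + 1 ≤ β) :
    ∃ M : ℝ, 0 < M ∧
      ∀ x ∈ Metric.ball y₀ R,
        A * (R - ‖x - y₀‖) ^ (β - n - 1) * |-M * (R ^ 2 - ‖x - y₀‖ ^ 2)| ^ (-α)
          ≤ hessianDet (fun y : EuclideanSpace ℝ (Fin n) =>
              -M * (R ^ 2 - ‖y - y₀‖ ^ 2)) x :=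
  exists_subsolution_ball_linear_case_general n hn A α R β hA hα y₀ hβ
end
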